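/- Let σ₁², σ₂² > 0 and P > 0 with C(ξ) = (1/2)·log(1+ξ). The function f(α) = α·[C(P/(α σ₁²)) − C(P/(α(σ₁²+σ₂²)))] for α ∈ (0,1] satisfies f(α) ≤ C(P/σ₁²) − C(P/(σ₁²+σ₂²)) = f(1). -/

import Mathlib

noncomputable def C (ξ : ℝ) : ℝ := (1/2) * Real.log (1 + ξ)

/-!
The secrecy gap `g x = C (x / σ₁) - C (x / (σ₁ + σ₂))` has derivative
`σ₂ / (2 (σ₁ + x) (σ₁ + σ₂ + x))`, which decreases in `x`, so `g` is concave on `[0, ∞)`.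
Since `g 0 = 0`, concavity between `0` and `P / α` gives `α · g (P / α) ≤ g P`.
-/

open Set

theorem ConcaveOn.smul_le_map_smul {𝕜 E β : Type*} [Ring 𝕜] [PartialOrder 𝕜] [IsOrderedRing 𝕜]
    [AddCommGroup E] [Module 𝕜 E] [AddCommMonoid β] [PartialOrder β] [IsOrderedAddMonoid β]
    [Module 𝕜 β] [PosSMulMono 𝕜 β] {s : Set E} {f : E → β} (hf : ConcaveOn 𝕜 s f)
    (h0 : (0 : E) ∈ s) (hf0 : 0 ≤ f 0) {x : E} (hx : x ∈ s) {a : 𝕜} (ha₀ : 0 ≤ a) (ha₁ : a ≤ 1) :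
    a • f x ≤ f (a • x) := by
  have h := hf.2 hx h0 ha₀ (sub_nonneg.2 ha₁) (add_sub_cancel a 1)
  rw [smul_zero, add_zero] at h
  exact (le_add_of_nonneg_right (smul_nonneg (sub_nonneg.2 ha₁) hf0)).trans h

theorem hasDerivAt_C_div {a x : ℝ} (ha : a ≠ 0) (hx : a + x ≠ 0) :
    HasDerivAt (fun x => C (x / a)) (1 / (2 * (a + x))) x := by
  have h := (((hasDerivAt_id' x).div_const a).const_add 1).log
    (by rw [one_add_div ha]; exact div_ne_zero hx ha)
  refine (h.const_mul (1 / 2)).congr_deriv ?_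
  field_simp

theorem concaveOn_C_div_sub_C_div {a b : ℝ} (ha : 0 < a) (hab : a ≤ b) :
    ConcaveOn ℝ (Ioi (-a)) (fun x => C (x / a) - C (x / b)) := by
  have hderiv : ∀ x ∈ Ioi (-a), HasDerivAt (fun x => C (x / a) - C (x / b))
      ((b - a) / (2 * ((a + x) * (b + x)))) x := by
    rintro x (hx : -a < x)
    have hax : 0 < a + x := by linarith
    have hbx : 0 < b + x := by linarith
    refine ((hasDerivAt_C_div ha.ne' hax.ne').sub
      (hasDerivAt_C_div (ha.trans_le hab).ne' hbx.ne')).congr_deriv ?_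
    field_simp
    ring
  have hdiff : DifferentiableOn ℝ (fun x => C (x / a) - C (x / b)) (Ioi (-a)) :=
    fun x hx => (hderiv x hx).differentiableAt.differentiableWithinAt
  refine AntitoneOn.concaveOn_of_deriv (convex_Ioi _) hdiff.continuousOn
    (by rwa [interior_Ioi]) ?_
  rw [interior_Ioi]
  rintro x (hx : -a < x) y (hy : -a < y) hxy
  rw [(hderiv x hx).deriv, (hderiv y hy).deriv]
  have : 0 < a + x := by linarith
  have : 0 < b + x := by linarith
  gcongr
  linarith

theorem bursty_no_better (σ1 σ2 P : ℝ) (h1 : 0 < σ1) (h2 : 0 < σ2) (hP : 0 < P) :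
    ∀ α : ℝ, α ∈ Set.Ioc (0:ℝ) 1 →
      α * (C (P / (α * σ1)) - C (P / (α * (σ1 + σ2)))) ≤
        C (P / σ1) - C (P / (σ1 + σ2)) := by
  rintro α ⟨hα₀, hα₁⟩
  have hconc : ConcaveOn ℝ (Ici 0) (fun x => C (x / σ1) - C (x / (σ1 + σ2))) :=
    (concaveOn_C_div_sub_C_div h1 (by linarith)).subset (Ici_subset_Ioi.2 (by linarith))
      (convex_Ici 0)
  have h := hconc.smul_le_map_smul self_mem_Ici (by simp) (div_pos hP hα₀).le hα₀.le hα₁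
  simpa only [smul_eq_mul, mul_div_cancel₀ P hα₀.ne', div_div] using h
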